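/- For every term $M$ of $\mathsf{PCFL}_\oplus$, if $M \Downarrow \mathscr{D}$ and $M \Downarrow \mathscr{E}$ (two derivable big-step approximation judgements), then there exists a value distribution $\mathscr{F}$ with $M \Downarrow \mathscr{F}$, $\mathscr{D} \le \mathscr{F}$ pointwise, and $\mathscr{E} \le \mathscr{F}$ pointwise. Consequently, the set of distributions $\mathscr{D}$ with $M\Downarrow\mathscr{D}$ is directed, and its pointwise supremum $\llbracket M \rrbracket$ is a well-defined value distribution. -/

import Mathlib

open scoped ENNReal Classical

namespace PCFL

/-- Types of PCFL⊕. -/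
inductive Ty : Type
  | bool | int
  | arrow (a b : Ty)
  | prod (a b : Ty)
  | list (a : Ty)
deriving DecidableEq

/-- Binary arithmetic operators (including `+`, `≤`, `=`). -/
inductive Op : Type | plus | le | eq
deriving DecidableEq

/-- Result type of an operator. -/
def Op.resTy : Op → Ty
  | .plus => .int
  | .le => .bool
  | .eq => .bool

/-- Terms of PCFL⊕, in de Bruijn representation. -/
inductive Tm : Type
  | var (n : ℕ)
  | cnat (n : ℕ)
  | cbool (b : Bool)
  | nil
  | pair (M N : Tm)
  | cons (M N : Tm)
  | lam (M : Tm)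
  | fixp (M : Tm)
  | choice (M N : Tm)
  | ite (L M N : Tm)
  | bop (o : Op) (M N : Tm)
  | fst (M : Tm)
  | snd (M : Tm)
  | caseL (L M N : Tm)  -- in `N` : var 1 is the head, var 0 the tail
  | app (M N : Tm)
deriving DecidableEq

/-- Semantics of an operator, as a value. -/
def Op.den : Op → ℕ → ℕ → Tm
  | .plus, n, m => .cnat (n + m)
  | .le, n, m => .cbool (decide (n ≤ m))
  | .eq, n, m => .cbool (decide (n = m))

/-- Substitution of the closed term `s` for the variable `k`. -/
def subst : Tm → ℕ → Tm → Tm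
  | .var n, k, s => if n = k then s else if k < n then .var (n - 1) else .var n
  | .cnat n, _, _ => .cnat n
  | .cbool b, _, _ => .cbool b
  | .nil, _, _ => .nil
  | .pair M N, k, s => .pair (subst M k s) (subst N k s)
  | .cons M N, k, s => .cons (subst M k s) (subst N k s)
  | .lam M, k, s => .lam (subst M (k + 1) s)
  | .fixp M, k, s => .fixp (subst M (k + 1) s)
  | .choice M N, k, s => .choice (subst M k s) (subst N k s)
  | .ite L M N, k, s => .ite (subst L k s) (subst M k s) (subst N k s)
  | .bop o M N, k, s => .bop o (subst M k s) (subst N k s)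
  | .fst M, k, s => .fst (subst M k s)
  | .snd M, k, s => .snd (subst M k s)
  | .caseL L M N, k, s => .caseL (subst L k s) (subst M k s) (subst N (k + 2) s)
  | .app M N, k, s => .app (subst M k s) (subst N k s)

/-- Values of PCFL⊕. -/
inductive IsValue : Tm → Prop
  | cnat (n) : IsValue (.cnat n)
  | cbool (b) : IsValue (.cbool b)
  | nil : IsValue .nil
  | lam (M) : IsValue (.lam M)
  | fixp (M) : IsValue (.fixp M)
  | cons (M N) : IsValue (.cons M N)
  | pair (M N) : IsValue (.pair M N)

/-- The Dirac distribution on a term. -/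
noncomputable def dirac (V : Tm) : Tm → ℝ≥0∞ := fun W => if W = V then 1 else 0

/-- Big-step approximation semantics `M ⇓ 𝒟` of PCFL⊕ (call-by-value). -/
inductive Eval : Tm → (Tm → ℝ≥0∞) → Prop
  | empty (M) : Eval M 0
  | val {V} : IsValue V → Eval V (dirac V)
  | bop {M N : Tm} {D E : Tm → ℝ≥0∞} (o : Op) : Eval M D → Eval N E →
      Eval (.bop o M N)
        (fun b => ∑' (n : ℕ) (m : ℕ), D (.cnat n) * E (.cnat m) * dirac (o.den n m) b)
  | app {M N : Tm} {K F : Tm → ℝ≥0∞} {E G : Tm → Tm → Tm → ℝ≥0∞} :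
      Eval M K → Eval N F →
      (∀ P v, K (.lam P) ≠ 0 → F v ≠ 0 → Eval (subst P 0 v) (E P v)) →
      (∀ Q v, K (.fixp Q) ≠ 0 → F v ≠ 0 →
        Eval (.app (subst Q 0 (.fixp Q)) v) (G Q v)) →
      Eval (.app M N)
        (fun b => ∑' v, F v *
          ((∑' P, K (.lam P) * E P v b) + ∑' Q, K (.fixp Q) * G Q v b))
  | ite {L M₁ M₂ : Tm} {D E₁ E₂ : Tm → ℝ≥0∞} :
      Eval L D → Eval M₁ E₁ → Eval M₂ E₂ →
      Eval (.ite L M₁ M₂)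
        (fun b => D (.cbool true) * E₁ b + D (.cbool false) * E₂ b)
  | caseL {L M₁ M₂ : Tm} {D E : Tm → ℝ≥0∞} {G K : Tm → Tm → Tm → ℝ≥0∞}
      {F : Tm → Tm → Tm → ℝ≥0∞} :
      Eval L D → Eval M₁ E →
      (∀ H T, D (.cons H T) ≠ 0 → Eval H (G H T)) →
      (∀ H T, D (.cons H T) ≠ 0 → Eval T (K H T)) →
      (∀ H T V W, D (.cons H T) ≠ 0 → G H T V ≠ 0 → K H T W ≠ 0 →
        Eval (subst (subst M₂ 1 V) 0 W) (F V W)) →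
      Eval (.caseL L M₁ M₂)
        (fun b => D .nil * E b +
          ∑' H, ∑' T, ∑' V, ∑' W, D (.cons H T) * G H T V * K H T W * F V W b)
  | fst {M : Tm} {D : Tm → ℝ≥0∞} {E : Tm → Tm → Tm → ℝ≥0∞} : Eval M D →
      (∀ P N, D (.pair P N) ≠ 0 → Eval P (E P N)) →
      Eval (.fst M) (fun b => ∑' P, ∑' N, D (.pair P N) * E P N b)
  | snd {M : Tm} {D : Tm → ℝ≥0∞} {E : Tm → Tm → Tm → ℝ≥0∞} : Eval M D →
      (∀ P N, D (.pair P N) ≠ 0 → Eval N (E P N)) →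
      Eval (.snd M) (fun b => ∑' P, ∑' N, D (.pair P N) * E P N b)
  | choice {M₁ M₂ : Tm} {D₁ D₂ : Tm → ℝ≥0∞} : Eval M₁ D₁ → Eval M₂ D₂ →
      Eval (.choice M₁ M₂) (fun b => D₁ b / 2 + D₂ b / 2)

/-- The big-step semantics `⟦M⟧`: the (pointwise) supremum of all approximations. -/
noncomputable def sem (M : Tm) : Tm → ℝ≥0∞ :=
  fun V => ⨆ (D : Tm → ℝ≥0∞) (_ : Eval M D), D V

/-- Typing judgements of PCFL⊕ (Figure 1), de Bruijn style. -/
inductive HasTy : List Ty → Tm → Ty → Prop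
  | var {Γ n σ} : Γ[n]? = some σ → HasTy Γ (.var n) σ
  | cnat {Γ n} : HasTy Γ (.cnat n) .int
  | cbool {Γ b} : HasTy Γ (.cbool b) .bool
  | nil {Γ σ} : HasTy Γ .nil (.list σ)
  | pair {Γ M N σ τ} : HasTy Γ M σ → HasTy Γ N τ → HasTy Γ (.pair M N) (.prod σ τ)
  | cons {Γ M N σ} : HasTy Γ M σ → HasTy Γ N (.list σ) → HasTy Γ (.cons M N) (.list σ)
  | lam {Γ M σ τ} : HasTy (σ :: Γ) M τ → HasTy Γ (.lam M) (.arrow σ τ)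
  | fixp {Γ M σ τ} : HasTy (.arrow σ τ :: Γ) M (.arrow σ τ) →
      HasTy Γ (.fixp M) (.arrow σ τ)
  | choice {Γ M N σ} : HasTy Γ M σ → HasTy Γ N σ → HasTy Γ (.choice M N) σ
  | ite {Γ L M N σ} : HasTy Γ L .bool → HasTy Γ M σ → HasTy Γ N σ →
      HasTy Γ (.ite L M N) σ
  | bop {Γ M N} (o : Op) : HasTy Γ M .int → HasTy Γ N .int →
      HasTy Γ (.bop o M N) o.resTy
  | fst {Γ M σ τ} : HasTy Γ M (.prod σ τ) → HasTy Γ (.fst M) σ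
  | snd {Γ M σ τ} : HasTy Γ M (.prod σ τ) → HasTy Γ (.snd M) τ
  | caseL {Γ L M N σ τ} : HasTy Γ L (.list σ) → HasTy Γ M τ →
      HasTy (.list σ :: σ :: Γ) N τ → HasTy Γ (.caseL L M N) τ
  | app {Γ M N σ τ} : HasTy Γ M (.arrow σ τ) → HasTy Γ N σ → HasTy Γ (.app M N) τ

end PCFL

/-!
Directedness is proved by induction on one derivation and inversion of the other: unless one of
them is the trivial `M ⇓ 0`, both end with the same rule, and their premises can be joined one by
one. Each rule builds its conclusion monotonically from its premises, weighted by
subprobabilities, so joining the premises joins the conclusions. Every approximation has mass at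
most `1` and is supported on values; since the approximations are directed, their supremum
commutes with sums, and `⟦M⟧` inherits both properties.
-/

open Function

namespace ENNReal

variable {α β γ : Type*}

lemma mul_le_mul_of_ne_zero_imp {a a' b b' : ℝ≥0∞} (ha : a ≤ a') (hb : a ≠ 0 → b ≤ b') :
    a * b ≤ a' * b' := by
  rcases eq_or_ne a 0 with rfl | h
  · simp
  · exact mul_le_mul' ha (hb h)

lemma tsum_mul_le_tsum_mul {w w' f f' : α → ℝ≥0∞} (hw : ∀ i, w i ≤ w' i)
    (hf : ∀ i, w i ≠ 0 → f i ≤ f' i) : ∑' i, w i * f i ≤ ∑' i, w' i * f' i :=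
  ENNReal.tsum_le_tsum fun i => mul_le_mul_of_ne_zero_imp (hw i) (hf i)

lemma tsum_tsum_mul_le (w : α → ℝ≥0∞) (μ : α → β → ℝ≥0∞)
    (hμ : ∀ i, w i ≠ 0 → ∑' b, μ i b ≤ 1) : ∑' b, ∑' i, w i * μ i b ≤ ∑' i, w i := by
  rw [ENNReal.tsum_comm]
  refine ENNReal.tsum_le_tsum fun i => ?_
  rw [ENNReal.tsum_mul_left]
  simpa using mul_le_mul_of_ne_zero_imp le_rfl (hμ i)

lemma tsum_tsum_tsum_mul_le (w : α → β → ℝ≥0∞) (μ : α → β → γ → ℝ≥0∞)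
    (hμ : ∀ i j, w i j ≠ 0 → ∑' c, μ i j c ≤ 1) :
    ∑' c, ∑' i, ∑' j, w i j * μ i j c ≤ ∑' i, ∑' j, w i j := by
  rw [ENNReal.tsum_comm]
  exact ENNReal.tsum_le_tsum fun i => tsum_tsum_mul_le _ _ (hμ i)

lemma tsum_tsum_mul_le_one {f : α → ℝ≥0∞} {g : β → ℝ≥0∞} (hf : ∑' a, f a ≤ 1)
    (hg : ∑' b, g b ≤ 1) : ∑' a, ∑' b, f a * g b ≤ 1 := by
  simp only [ENNReal.tsum_mul_left, ENNReal.tsum_mul_right]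
  exact mul_le_one' hf hg

lemma tsum_comp_add_tsum_comp_le {g : α → γ} {h : β → γ} (hg : Injective g) (hh : Injective h)
    (hgh : ∀ a b, g a ≠ h b) (f : γ → ℝ≥0∞) :
    ∑' a, f (g a) + ∑' b, f (h b) ≤ ∑' c, f c := by
  simpa [Summable.tsum_sum ENNReal.summable ENNReal.summable] using
    ENNReal.tsum_comp_le_tsum_of_injective (hg.sumElim hh hgh) f

lemma tsum_tsum_comp_le {g : α → β → γ} (hg : Injective2 g) (f : γ → ℝ≥0∞) :
    ∑' a, ∑' b, f (g a b) ≤ ∑' c, f c := by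
  rw [← ENNReal.tsum_prod]
  refine ENNReal.tsum_comp_le_tsum_of_injective (fun p q hpq => ?_) f
  obtain ⟨h₁, h₂⟩ := hg hpq
  exact Prod.ext h₁ h₂

lemma tsum_iSup_of_directed {ι : Type*} {f : ι → α → ℝ≥0∞} (hf : Directed (· ≤ ·) f) :
    ∑' a, ⨆ i, f i a = ⨆ i, ∑' a, f i a := by
  refine le_antisymm ?_ (iSup_le fun i => ENNReal.tsum_le_tsum fun a => le_iSup (f · a) i)
  rw [ENNReal.tsum_eq_iSup_sum]
  refine iSup_le fun s => ?_
  rw [ENNReal.finsetSum_iSup fun i j => (hf i j).imp fun _ hk a => ⟨hk.1 a, hk.2 a⟩]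
  exact iSup_mono fun i => ENNReal.sum_le_tsum s

end ENNReal

namespace PCFL

open ENNReal

lemma dirac_apply_of_ne {V W : Tm} (h : W ≠ V) : dirac V W = 0 := if_neg h

lemma tsum_dirac (V : Tm) : ∑' W, dirac V W = 1 := tsum_ite_eq V 1

lemma Op.isValue_den (o : Op) (n m : ℕ) : IsValue (o.den n m) := by
  cases o <;> constructor

lemma tsum_lam_add_tsum_fixp_le (D : Tm → ℝ≥0∞) :
    ∑' P, D (.lam P) + ∑' Q, D (.fixp Q) ≤ ∑' V, D V :=
  tsum_comp_add_tsum_comp_le (fun _ _ => Tm.lam.inj) (fun _ _ => Tm.fixp.inj) (by simp) D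

lemma add_tsum_tsum_cons_le (D : Tm → ℝ≥0∞) :
    D .nil + ∑' H, ∑' T, D (.cons H T) ≤ ∑' V, D V := by
  simpa [ENNReal.tsum_prod'] using tsum_comp_add_tsum_comp_le (g := fun _ : Unit => Tm.nil)
    (h := fun p : Tm × Tm => .cons p.1 p.2) (fun _ _ _ => rfl)
    (fun _ _ h => Prod.ext (Tm.cons.inj h).1 (Tm.cons.inj h).2) (by simp) D

theorem Eval.tsum_le_one {M : Tm} {D : Tm → ℝ≥0∞} (h : Eval M D) : ∑' V, D V ≤ 1 := by
  induction h with
  | empty => simp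
  | val => exact (tsum_dirac _).le
  | bop o _ _ ihM ihN =>
    refine (tsum_tsum_tsum_mul_le _ _ fun _ _ _ => (tsum_dirac _).le).trans ?_
    exact tsum_tsum_mul_le_one
      ((ENNReal.tsum_comp_le_tsum_of_injective (fun _ _ => Tm.cnat.inj) _).trans ihM)
      ((ENNReal.tsum_comp_le_tsum_of_injective (fun _ _ => Tm.cnat.inj) _).trans ihN)
  | @app _ _ K _ _ _ _ _ _ _ ihM ihN ihlam ihfix =>
    refine (tsum_tsum_mul_le _ _ fun v hv => ?_).trans ihN
    rw [ENNReal.tsum_add]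
    calc _ ≤ ∑' P, K (.lam P) + ∑' Q, K (.fixp Q) :=
          add_le_add (tsum_tsum_mul_le _ _ fun P hP => ihlam P v hP hv)
            (tsum_tsum_mul_le _ _ fun Q hQ => ihfix Q v hQ hv)
      _ ≤ 1 := (tsum_lam_add_tsum_fixp_le K).trans ihM
  | @ite _ _ _ D _ _ _ _ _ ihL ihM₁ ihM₂ =>
    rw [ENNReal.tsum_add, ENNReal.tsum_mul_left, ENNReal.tsum_mul_left]
    calc _ ≤ D (.cbool true) + D (.cbool false) :=
          add_le_add (mul_le_of_le_one_right' ihM₁) (mul_le_of_le_one_right' ihM₂)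
      _ ≤ ∑' V, D V := (Finset.sum_pair (by simp)).symm.trans_le (ENNReal.sum_le_tsum _)
      _ ≤ 1 := ihL
  | @caseL _ _ _ D _ G K F _ _ _ _ _ ihL ihM₁ ihG ihK ihF =>
    rw [ENNReal.tsum_add, ENNReal.tsum_mul_left]
    have hcons : ∑' b, ∑' H, ∑' T, ∑' V, ∑' W, D (.cons H T) * G H T V * K H T W * F V W b ≤
        ∑' H, ∑' T, D (.cons H T) := by
      calc _ = ∑' b, ∑' H, ∑' T, D (.cons H T) *
              ∑' V, ∑' W, G H T V * K H T W * F V W b :=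
            tsum_congr fun b => by simp only [mul_assoc, ENNReal.tsum_mul_left]
        _ ≤ _ := tsum_tsum_tsum_mul_le _ _ fun H T hD =>
            (tsum_tsum_tsum_mul_le _ _ fun V W hGK => ihF H T V W hD (left_ne_zero_of_mul hGK)
              (right_ne_zero_of_mul hGK)).trans (tsum_tsum_mul_le_one (ihG H T hD) (ihK H T hD))
    calc _ ≤ D .nil + ∑' H, ∑' T, D (.cons H T) := add_le_add (mul_le_of_le_one_right' ihM₁) hcons
      _ ≤ 1 := (add_tsum_tsum_cons_le D).trans ihL
  | fst _ _ ihM ihE | snd _ _ ihM ihE =>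
    exact (tsum_tsum_tsum_mul_le _ _ ihE).trans
      ((tsum_tsum_comp_le (fun _ _ _ _ => Tm.pair.inj) _).trans ihM)
  | @choice _ _ D₁ D₂ _ _ ihM₁ ihM₂ =>
    calc ∑' b, (D₁ b / 2 + D₂ b / 2) = (∑' b, D₁ b) / 2 + (∑' b, D₂ b) / 2 := by
          simp only [ENNReal.tsum_add, div_eq_mul_inv, ENNReal.tsum_mul_right]
      _ ≤ 1 / 2 + 1 / 2 := by gcongr
      _ = 1 := ENNReal.add_halves 1

theorem Eval.apply_eq_zero_of_not_isValue {M : Tm} {D : Tm → ℝ≥0∞} (h : Eval M D) {V : Tm}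
    (hV : ¬IsValue V) : D V = 0 := by
  induction h with
  | empty => rfl
  | val hW => exact dirac_apply_of_ne fun h => hV (h ▸ hW)
  | bop o =>
    refine ENNReal.tsum_eq_zero.2 fun n => ENNReal.tsum_eq_zero.2 fun m => ?_
    exact mul_eq_zero_of_right _ (dirac_apply_of_ne fun h => hV (h ▸ o.isValue_den n m))
  | app _ _ _ _ _ _ ihlam ihfix =>
    refine ENNReal.tsum_eq_zero.2 fun v => mul_eq_zero_of_ne_zero_imp_eq_zero fun hv => ?_
    exact add_eq_zero.2
      ⟨ENNReal.tsum_eq_zero.2 fun P => mul_eq_zero_of_ne_zero_imp_eq_zero (ihlam P v · hv),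
        ENNReal.tsum_eq_zero.2 fun Q => mul_eq_zero_of_ne_zero_imp_eq_zero (ihfix Q v · hv)⟩
  | ite _ _ _ _ ihM₁ ihM₂ => simp [ihM₁, ihM₂]
  | caseL _ _ _ _ _ _ ihM₁ _ _ ihF =>
    simp only [ihM₁, mul_zero, zero_add, ENNReal.tsum_eq_zero]
    intro H T V W
    refine mul_eq_zero_of_ne_zero_imp_eq_zero fun hDGK => ?_
    obtain ⟨hDG, hK⟩ := mul_ne_zero_iff.1 hDGK
    obtain ⟨hD, hG⟩ := mul_ne_zero_iff.1 hDG
    exact ihF H T V W hD hG hK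
  | fst _ _ _ ihE | snd _ _ _ ihE =>
    exact ENNReal.tsum_eq_zero.2 fun P => ENNReal.tsum_eq_zero.2 fun N =>
      mul_eq_zero_of_ne_zero_imp_eq_zero (ihE P N)
  | choice _ _ ihM₁ ihM₂ => simp [ihM₁, ihM₂]

def Joinable (M : Tm) (D : Tm → ℝ≥0∞) : Prop :=
  ∀ E, Eval M E → ∃ F, Eval M F ∧ D ≤ F ∧ E ≤ F

lemma IsValue.eval_eq_zero_or_eq_dirac {V : Tm} {E : Tm → ℝ≥0∞} (hV : IsValue V)
    (h : Eval V E) : E = 0 ∨ E = dirac V := by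
  cases hV <;> cases h <;> simp

lemma joinable_zero (M : Tm) : Joinable M 0 := fun E hE => ⟨E, hE, fun _ => zero_le, le_rfl⟩

lemma IsValue.joinable_dirac {V : Tm} (hV : IsValue V) : Joinable V (dirac V) := by
  intro E hE
  rcases hV.eval_eq_zero_or_eq_dirac hE with rfl | rfl
  · exact ⟨dirac V, .val hV, le_rfl, fun _ => zero_le⟩
  · exact ⟨dirac V, .val hV, le_rfl, le_rfl⟩

/- The premises of a rule are only required where the weights in front of them are nonzero, so
two derivations by the same rule can only be joined premise-wise under such side conditions. -/
lemma exists_eval_ge_of_imp {M : Tm} {D₁ D₂ : Tm → ℝ≥0∞} {c₁ c₂ : Prop}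
    (h₁ : c₁ → Eval M D₁) (hj : c₁ → Joinable M D₁) (h₂ : c₂ → Eval M D₂) :
    ∃ F, Eval M F ∧ (c₁ → D₁ ≤ F) ∧ (c₂ → D₂ ≤ F) := by
  by_cases hc₁ : c₁ <;> by_cases hc₂ : c₂
  · obtain ⟨F, hF, h₁F, h₂F⟩ := hj hc₁ D₂ (h₂ hc₂)
    exact ⟨F, hF, fun _ => h₁F, fun _ => h₂F⟩
  · exact ⟨D₁, h₁ hc₁, fun _ => le_rfl, (absurd · hc₂)⟩
  · exact ⟨D₂, h₂ hc₂, (absurd · hc₁), fun _ => le_rfl⟩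
  · exact ⟨0, .empty M, (absurd · hc₁), (absurd · hc₂)⟩

section Rules

variable {L M N M₁ M₂ : Tm}

lemma Joinable.bop (o : Op) {D E : Tm → ℝ≥0∞} (hM : Eval M D) (hN : Eval N E)
    (ihM : Joinable M D) (ihN : Joinable N E) :
    Joinable (.bop o M N)
      (fun b => ∑' (n : ℕ) (m : ℕ), D (.cnat n) * E (.cnat m) * dirac (o.den n m) b) := by
  intro _ h
  cases h with
  | empty => exact ⟨_, .bop o hM hN, le_rfl, fun _ => zero_le⟩
  | val h => cases h
  | bop _ hM' hN' =>
    obtain ⟨D₃, hD₃, hD, hD'⟩ := ihM _ hM'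
    obtain ⟨E₃, hE₃, hE, hE'⟩ := ihN _ hN'
    refine ⟨_, .bop o hD₃ hE₃, fun b => ?_, fun b => ?_⟩ <;> dsimp only <;> gcongr
    exacts [hD _, hE _, hD' _, hE' _]

lemma Joinable.app {K F : Tm → ℝ≥0∞} {E G : Tm → Tm → Tm → ℝ≥0∞} (hM : Eval M K)
    (hN : Eval N F) (hlam : ∀ P v, K (.lam P) ≠ 0 → F v ≠ 0 → Eval (subst P 0 v) (E P v))
    (hfix : ∀ Q v, K (.fixp Q) ≠ 0 → F v ≠ 0 → Eval (.app (subst Q 0 (.fixp Q)) v) (G Q v))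
    (ihM : Joinable M K) (ihN : Joinable N F)
    (ihlam : ∀ P v, K (.lam P) ≠ 0 → F v ≠ 0 → Joinable (subst P 0 v) (E P v))
    (ihfix : ∀ Q v, K (.fixp Q) ≠ 0 → F v ≠ 0 →
      Joinable (.app (subst Q 0 (.fixp Q)) v) (G Q v)) :
    Joinable (.app M N) (fun b => ∑' v, F v *
      ((∑' P, K (.lam P) * E P v b) + ∑' Q, K (.fixp Q) * G Q v b)) := by
  intro _ h
  cases h with
  | empty => exact ⟨_, .app hM hN hlam hfix, le_rfl, fun _ => zero_le⟩
  | val h => cases h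
  | app hM' hN' hlam' hfix' =>
    obtain ⟨K₃, hK₃, hK, hK'⟩ := ihM _ hM'
    obtain ⟨F₃, hF₃, hF, hF'⟩ := ihN _ hN'
    choose E₃ hE₃ hE hE' using fun P v =>
      exists_eval_ge_of_imp (And.elim (hlam P v)) (And.elim (ihlam P v)) (And.elim (hlam' P v))
    choose G₃ hG₃ hG hG' using fun Q v =>
      exists_eval_ge_of_imp (And.elim (hfix Q v)) (And.elim (ihfix Q v)) (And.elim (hfix' Q v))
    refine ⟨_, .app hK₃ hF₃ (fun P v _ _ => hE₃ P v) (fun Q v _ _ => hG₃ Q v), fun b => ?_,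
      fun b => ?_⟩
    · exact tsum_mul_le_tsum_mul hF fun v hv => add_le_add
        (tsum_mul_le_tsum_mul (fun _ => hK _) fun P hP => hE P v ⟨hP, hv⟩ b)
        (tsum_mul_le_tsum_mul (fun _ => hK _) fun Q hQ => hG Q v ⟨hQ, hv⟩ b)
    · exact tsum_mul_le_tsum_mul hF' fun v hv => add_le_add
        (tsum_mul_le_tsum_mul (fun _ => hK' _) fun P hP => hE' P v ⟨hP, hv⟩ b)
        (tsum_mul_le_tsum_mul (fun _ => hK' _) fun Q hQ => hG' Q v ⟨hQ, hv⟩ b)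

lemma Joinable.ite {D E₁ E₂ : Tm → ℝ≥0∞} (hL : Eval L D) (hM₁ : Eval M₁ E₁)
    (hM₂ : Eval M₂ E₂) (ihL : Joinable L D) (ihM₁ : Joinable M₁ E₁) (ihM₂ : Joinable M₂ E₂) :
    Joinable (.ite L M₁ M₂) (fun b => D (.cbool true) * E₁ b + D (.cbool false) * E₂ b) := by
  intro _ h
  cases h with
  | empty => exact ⟨_, .ite hL hM₁ hM₂, le_rfl, fun _ => zero_le⟩
  | val h => cases h
  | ite hL' hM₁' hM₂' =>
    obtain ⟨D₃, hD₃, hD, hD'⟩ := ihL _ hL'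
    obtain ⟨A, hA, hE₁, hE₁'⟩ := ihM₁ _ hM₁'
    obtain ⟨B, hB, hE₂, hE₂'⟩ := ihM₂ _ hM₂'
    exact ⟨_, .ite hD₃ hA hB,
      fun b => add_le_add (mul_le_mul' (hD _) (hE₁ b)) (mul_le_mul' (hD _) (hE₂ b)),
      fun b => add_le_add (mul_le_mul' (hD' _) (hE₁' b)) (mul_le_mul' (hD' _) (hE₂' b))⟩

lemma Joinable.caseL {D E : Tm → ℝ≥0∞} {G K F : Tm → Tm → Tm → ℝ≥0∞} (hL : Eval L D)
    (hM₁ : Eval M₁ E) (hG : ∀ H T, D (.cons H T) ≠ 0 → Eval H (G H T))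
    (hK : ∀ H T, D (.cons H T) ≠ 0 → Eval T (K H T))
    (hF : ∀ H T V W, D (.cons H T) ≠ 0 → G H T V ≠ 0 → K H T W ≠ 0 →
      Eval (subst (subst M₂ 1 V) 0 W) (F V W))
    (ihL : Joinable L D) (ihM₁ : Joinable M₁ E)
    (ihG : ∀ H T, D (.cons H T) ≠ 0 → Joinable H (G H T))
    (ihK : ∀ H T, D (.cons H T) ≠ 0 → Joinable T (K H T))
    (ihF : ∀ H T V W, D (.cons H T) ≠ 0 → G H T V ≠ 0 → K H T W ≠ 0 →
      Joinable (subst (subst M₂ 1 V) 0 W) (F V W)) :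
    Joinable (.caseL L M₁ M₂) (fun b => D .nil * E b +
      ∑' H, ∑' T, ∑' V, ∑' W, D (.cons H T) * G H T V * K H T W * F V W b) := by
  intro _ h
  cases h with
  | empty => exact ⟨_, .caseL hL hM₁ hG hK hF, le_rfl, fun _ => zero_le⟩
  | val h => cases h
  | @caseL _ _ _ D' _ G' K' _ hL' hM₁' hG' hK' hF' =>
    obtain ⟨D₃, hD₃, hD, hD'⟩ := ihL _ hL'
    obtain ⟨E₃, hE₃, hE, hE'⟩ := ihM₁ _ hM₁'
    choose G₃ hG₃ hGle hG'le using fun H T => exists_eval_ge_of_imp (hG H T) (ihG H T) (hG' H T)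
    choose K₃ hK₃ hKle hK'le using fun H T => exists_eval_ge_of_imp (hK H T) (ihK H T) (hK' H T)
    choose F₃ hF₃ hFle hF'le using fun V W => exists_eval_ge_of_imp
      (c₁ := ∃ H T, D (.cons H T) ≠ 0 ∧ G H T V ≠ 0 ∧ K H T W ≠ 0)
      (c₂ := ∃ H T, D' (.cons H T) ≠ 0 ∧ G' H T V ≠ 0 ∧ K' H T W ≠ 0)
      (fun ⟨H, T, h₁, h₂, h₃⟩ => hF H T V W h₁ h₂ h₃)
      (fun ⟨H, T, h₁, h₂, h₃⟩ => ihF H T V W h₁ h₂ h₃)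
      (fun ⟨H, T, h₁, h₂, h₃⟩ => hF' H T V W h₁ h₂ h₃)
    refine ⟨_, .caseL hD₃ hE₃ (fun H T _ => hG₃ H T) (fun H T _ => hK₃ H T)
      (fun H T V W _ _ _ => hF₃ V W), fun b => add_le_add (mul_le_mul' (hD _) (hE b)) ?_,
      fun b => add_le_add (mul_le_mul' (hD' _) (hE' b)) ?_⟩
    · refine ENNReal.tsum_le_tsum fun H => ENNReal.tsum_le_tsum fun T =>
        ENNReal.tsum_le_tsum fun V => tsum_mul_le_tsum_mul (fun W => ?_)
          fun W h => hFle V W ⟨H, T, by simpa [and_assoc] using h⟩ b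
      exact mul_le_mul_of_ne_zero_imp (mul_le_mul_of_ne_zero_imp (hD _) (hGle H T · V))
        fun h => hKle H T (left_ne_zero_of_mul h) W
    · refine ENNReal.tsum_le_tsum fun H => ENNReal.tsum_le_tsum fun T =>
        ENNReal.tsum_le_tsum fun V => tsum_mul_le_tsum_mul (fun W => ?_)
          fun W h => hF'le V W ⟨H, T, by simpa [and_assoc] using h⟩ b
      exact mul_le_mul_of_ne_zero_imp (mul_le_mul_of_ne_zero_imp (hD' _) (hG'le H T · V))
        fun h => hK'le H T (left_ne_zero_of_mul h) W

lemma Joinable.fst {D : Tm → ℝ≥0∞} {E : Tm → Tm → Tm → ℝ≥0∞} (hM : Eval M D)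
    (hE : ∀ P N, D (.pair P N) ≠ 0 → Eval P (E P N)) (ihM : Joinable M D)
    (ihE : ∀ P N, D (.pair P N) ≠ 0 → Joinable P (E P N)) :
    Joinable (.fst M) (fun b => ∑' P, ∑' N, D (.pair P N) * E P N b) := by
  intro _ h
  cases h with
  | empty => exact ⟨_, .fst hM hE, le_rfl, fun _ => zero_le⟩
  | val h => cases h
  | fst hM' hE' =>
    obtain ⟨D₃, hD₃, hD, hD'⟩ := ihM _ hM'
    choose E₃ hE₃ hEle hE'le using fun P N => exists_eval_ge_of_imp (hE P N) (ihE P N) (hE' P N)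
    exact ⟨_, .fst hD₃ fun P N _ => hE₃ P N,
      fun b => ENNReal.tsum_le_tsum fun P =>
        tsum_mul_le_tsum_mul (fun _ => hD _) fun N h => hEle P N h b,
      fun b => ENNReal.tsum_le_tsum fun P =>
        tsum_mul_le_tsum_mul (fun _ => hD' _) fun N h => hE'le P N h b⟩

lemma Joinable.snd {D : Tm → ℝ≥0∞} {E : Tm → Tm → Tm → ℝ≥0∞} (hM : Eval M D)
    (hE : ∀ P N, D (.pair P N) ≠ 0 → Eval N (E P N)) (ihM : Joinable M D)
    (ihE : ∀ P N, D (.pair P N) ≠ 0 → Joinable N (E P N)) :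
    Joinable (.snd M) (fun b => ∑' P, ∑' N, D (.pair P N) * E P N b) := by
  intro _ h
  cases h with
  | empty => exact ⟨_, .snd hM hE, le_rfl, fun _ => zero_le⟩
  | val h => cases h
  | snd hM' hE' =>
    obtain ⟨D₃, hD₃, hD, hD'⟩ := ihM _ hM'
    choose E₃ hE₃ hEle hE'le using fun P N => exists_eval_ge_of_imp (hE P N) (ihE P N) (hE' P N)
    exact ⟨_, .snd hD₃ fun P N _ => hE₃ P N,
      fun b => ENNReal.tsum_le_tsum fun P =>
        tsum_mul_le_tsum_mul (fun _ => hD _) fun N h => hEle P N h b,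
      fun b => ENNReal.tsum_le_tsum fun P =>
        tsum_mul_le_tsum_mul (fun _ => hD' _) fun N h => hE'le P N h b⟩

lemma Joinable.choice {D₁ D₂ : Tm → ℝ≥0∞} (hM₁ : Eval M₁ D₁) (hM₂ : Eval M₂ D₂)
    (ihM₁ : Joinable M₁ D₁) (ihM₂ : Joinable M₂ D₂) :
    Joinable (.choice M₁ M₂) (fun b => D₁ b / 2 + D₂ b / 2) := by
  intro _ h
  cases h with
  | empty => exact ⟨_, .choice hM₁ hM₂, le_rfl, fun _ => zero_le⟩
  | val h => cases h
  | choice hM₁' hM₂' =>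
    obtain ⟨A, hA, hD₁, hD₁'⟩ := ihM₁ _ hM₁'
    obtain ⟨B, hB, hD₂, hD₂'⟩ := ihM₂ _ hM₂'
    refine ⟨_, .choice hA hB, fun b => ?_, fun b => ?_⟩ <;> dsimp only <;> gcongr
    exacts [hD₁ b, hD₂ b, hD₁' b, hD₂' b]

end Rules

theorem Eval.joinable {M : Tm} {D : Tm → ℝ≥0∞} (h : Eval M D) : Joinable M D := by
  induction h with
  | empty M => exact joinable_zero M
  | val hV => exact hV.joinable_dirac
  | bop o hM hN ihM ihN => exact .bop o hM hN ihM ihN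
  | app hM hN hlam hfix ihM ihN ihlam ihfix => exact .app hM hN hlam hfix ihM ihN ihlam ihfix
  | ite hL hM₁ hM₂ ihL ihM₁ ihM₂ => exact .ite hL hM₁ hM₂ ihL ihM₁ ihM₂
  | caseL hL hM₁ hG hK hF ihL ihM₁ ihG ihK ihF =>
    exact .caseL hL hM₁ hG hK hF ihL ihM₁ ihG ihK ihF
  | fst hM hE ihM ihE => exact .fst hM hE ihM ihE
  | snd hM hE ihM ihE => exact .snd hM hE ihM ihE
  | choice hM₁ hM₂ ihM₁ ihM₂ => exact .choice hM₁ hM₂ ihM₁ ihM₂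

lemma directed_eval (M : Tm) : Directed (· ≤ ·) (fun D : {D // Eval M D} => D.1) :=
  fun D E =>
    let ⟨F, hF, hDF, hEF⟩ := D.2.joinable E.1 E.2
    ⟨⟨F, hF⟩, hDF, hEF⟩

theorem tsum_sem_le_one (M : Tm) : ∑' V, sem M V ≤ 1 := by
  simp only [sem, iSup_subtype']
  rw [tsum_iSup_of_directed (directed_eval M)]
  exact iSup_le fun D => D.2.tsum_le_one

theorem isValue_of_sem_ne_zero {M V : Tm} (h : sem M V ≠ 0) : IsValue V := by
  by_contra hV
  exact h (ENNReal.iSup_eq_zero.2 fun D => ENNReal.iSup_eq_zero.2 fun hD =>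
    hD.apply_eq_zero_of_not_isValue hV)

/-- the big-step approximations of a term are directed (any two are
dominated by a third), and their pointwise supremum `⟦M⟧` is a well-defined value
distribution (its support consists of values and its total mass is at most 1). -/
theorem stmt9 :
    (∀ (M : Tm) (D E : Tm → ℝ≥0∞), Eval M D → Eval M E →
      ∃ F : Tm → ℝ≥0∞, Eval M F ∧ (∀ V, D V ≤ F V) ∧ (∀ V, E V ≤ F V)) ∧
    (∀ M : Tm, DirectedOn (· ≤ ·) {D : Tm → ℝ≥0∞ | Eval M D}) ∧
    (∀ M : Tm, (∑' V, sem M V) ≤ 1 ∧ ∀ V, sem M V ≠ 0 → IsValue V) :=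
  ⟨fun _ _ E hD hE => hD.joinable E hE, fun _ _ hD E hE => hD.joinable E hE,
    fun M => ⟨tsum_sem_le_one M, fun _ => isValue_of_sem_ne_zero⟩⟩

end PCFL
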